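/- arXiv:2211.05912 — 4 statements merged into one kernel-verified Lean document; each statement's English description precedes it below -/
import Mathlib

section
/- Let X = CZ(G_x, c_x, A_x, b_x) ⊂ ℝⁿ and W = CZ(G_w, c_w, A_w, b_w) ⊂ ℝ^p be constrained zonotopes, and M ∈ ℝ^{p×n}. Then the generalized intersection X ∩_M W = {x ∈ X : M x ∈ W} equals the constrained zonotope with generator matrix [G_x 0_{n×n_g^w}], center c_x, constraint matrix [[A_x, 0],[0, A_w],[M G_x, -G_w]], and constraint vector [b_x; b_w; c_w − M c_x]. -/
def CZ {n g h : Type*} [Fintype g] [Fintype h]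
    (G : Matrix n g ℝ) (c : n → ℝ) (A : Matrix h g ℝ) (b : h → ℝ) : Set (n → ℝ) :=
  {x | ∃ ξ : g → ℝ, (∀ i, |ξ i| ≤ 1) ∧ A.mulVec ξ = b ∧ x = G.mulVec ξ + c}

/-! Stacking a factor vector `ξx` of `X` with a factor vector `ξw` of `W` gives a factor vector
`(ξx, ξw)` of the new set; its last block of constraints, `M Gx ξx - Gw ξw = cw - M cx`, says
exactly that `M (Gx ξx + cx) = Gw ξw + cw`, i.e. that `M x ∈ W` is witnessed by `ξw`. -/

open Matrix

theorem mem_CZ_sum_iff {n g₁ g₂ h : Type*} [Fintype g₁] [Fintype g₂] [Fintype h]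
    (G : Matrix n (g₁ ⊕ g₂) ℝ) (c : n → ℝ) (A : Matrix h (g₁ ⊕ g₂) ℝ)
    (b : h → ℝ) (x : n → ℝ) :
    x ∈ CZ G c A b ↔ ∃ ξ₁ ξ₂, (∀ i, |ξ₁ i| ≤ 1) ∧ (∀ j, |ξ₂ j| ≤ 1) ∧
      A *ᵥ Sum.elim ξ₁ ξ₂ = b ∧ x = G *ᵥ Sum.elim ξ₁ ξ₂ + c := by
  simp only [CZ, Set.mem_ofPred_eq, Sum.exists_sum, Sum.forall, and_assoc]
  -- `Sum.exists_sum` yields `Sum.rec ξ₁ ξ₂`, which is definitionally `Sum.elim ξ₁ ξ₂`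
  rfl

theorem fromCols_zero_mulVec_sumElim {R n g₁ g₂ : Type*} [Ring R] [Fintype g₁] [Fintype g₂]
    (G : Matrix n g₁ R) (ξ₁ : g₁ → R) (ξ₂ : g₂ → R) :
    fromCols G 0 *ᵥ Sum.elim ξ₁ ξ₂ = G *ᵥ ξ₁ := by
  rw [fromCols_mulVec_sumElim, zero_mulVec, add_zero]

theorem fromRows_mulVec_sumElim_eq_iff {R n p g₁ g₂ h₁ h₂ : Type*} [Ring R] [Fintype n]
    [Fintype g₁] [Fintype g₂] (G₁ : Matrix n g₁ R) (c₁ : n → R) (A₁ : Matrix h₁ g₁ R)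
    (b₁ : h₁ → R) (G₂ : Matrix p g₂ R) (c₂ : p → R) (A₂ : Matrix h₂ g₂ R) (b₂ : h₂ → R)
    (M : Matrix p n R) (ξ₁ : g₁ → R) (ξ₂ : g₂ → R) :
    fromRows (fromBlocks A₁ 0 0 A₂) (fromCols (M * G₁) (-G₂)) *ᵥ Sum.elim ξ₁ ξ₂
        = Sum.elim (Sum.elim b₁ b₂) (c₂ - M *ᵥ c₁) ↔
      A₁ *ᵥ ξ₁ = b₁ ∧ A₂ *ᵥ ξ₂ = b₂ ∧ M *ᵥ (G₁ *ᵥ ξ₁ + c₁) = G₂ *ᵥ ξ₂ + c₂ := by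
  simp only [fromRows_mulVec, fromBlocks_mulVec, fromCols_mulVec_sumElim, zero_mulVec, add_zero,
    zero_add, Sum.elim_eq_iff, Sum.elim_comp_inl, Sum.elim_comp_inr, and_assoc]
  rw [mulVec_add, mulVec_mulVec, neg_mulVec, ← sub_eq_add_neg, sub_eq_sub_iff_add_eq_add,
    add_comm (G₂ *ᵥ ξ₂)]

theorem generalized_intersection_of_CZ {n p ngx ngw nhx nhw : ℕ}
    (Gx : Matrix (Fin n) (Fin ngx) ℝ) (cx : Fin n → ℝ)
    (Ax : Matrix (Fin nhx) (Fin ngx) ℝ) (bx : Fin nhx → ℝ)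
    (Gw : Matrix (Fin p) (Fin ngw) ℝ) (cw : Fin p → ℝ)
    (Aw : Matrix (Fin nhw) (Fin ngw) ℝ) (bw : Fin nhw → ℝ)
    (M : Matrix (Fin p) (Fin n) ℝ) :
    {x ∈ CZ Gx cx Ax bx | M.mulVec x ∈ CZ Gw cw Aw bw}
      = CZ (Matrix.fromCols Gx (0 : Matrix (Fin n) (Fin ngw) ℝ)) cx
          (Matrix.fromRows (Matrix.fromBlocks Ax 0 0 Aw)
            (Matrix.fromCols (M * Gx) (-Gw)))
          (Sum.elim (Sum.elim bx bw) (cw - M.mulVec cx)) := by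
  ext x
  simp only [Set.mem_ofPred_eq, mem_CZ_sum_iff, fromCols_zero_mulVec_sumElim,
    fromRows_mulVec_sumElim_eq_iff]
  constructor
  · rintro ⟨⟨ξ₁, hξ₁, hA₁, rfl⟩, ξ₂, hξ₂, hA₂, hM⟩
    exact ⟨ξ₁, ξ₂, hξ₁, hξ₂, ⟨hA₁, hA₂, hM⟩, rfl⟩
  · rintro ⟨ξ₁, ξ₂, hξ₁, hξ₂, ⟨hA₁, hA₂, hM⟩, rfl⟩
    exact ⟨⟨ξ₁, hξ₁, hA₁, rfl⟩, ξ₂, hξ₂, hA₂, hM⟩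
end

section
/- Let H be a real symmetric n×n matrix, and let [H] be an interval matrix with midpoint M = mid([H]) and radius R = rad([H]), i.e., M − R ≤ H ≤ M + R entrywise with M symmetric and R entrywise nonnegative. Then the smallest eigenvalue of H satisfies λ_min(H) ≥ λ_min(M) − ρ(R), where ρ(R) is the spectral radius of R. -/
/-!
Write `H = M + D`. Entrywise `|D| ≤ R` gives `‖D ^ k‖ ≤ ‖R ^ k‖` in the `ℓ∞` operator norm, so by
Gelfand's formula every eigenvalue of the symmetric matrix `D` has modulus at most `ρ(R)`. In the
Loewner order this reads `D ≥ -ρ(R) • 1`; adding `M ≥ λ_min(M) • 1` gives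
`H ≥ (λ_min(M) - ρ(R)) • 1`, i.e. every eigenvalue of `H` is at least `λ_min(M) - ρ(R)`.
-/

open scoped ENNReal MatrixOrder

namespace Matrix

variable {ι : Type*} [Fintype ι] [DecidableEq ι]

theorem abs_pow_apply_le_pow_apply {α : Type*} [Ring α] [LinearOrder α] [IsStrictOrderedRing α]
    {D R : Matrix ι ι α} (h : ∀ i j, |D i j| ≤ R i j) (k : ℕ) (i j : ι) :
    |(D ^ k) i j| ≤ (R ^ k) i j := by
  induction k generalizing j with
  | zero => by_cases hij : i = j <;> simp [hij]
  | succ k ih =>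
    rw [pow_succ, pow_succ, mul_apply, mul_apply]
    refine (Finset.abs_sum_le_sum_abs _ _).trans (Finset.sum_le_sum fun l _ => ?_)
    rw [abs_mul]
    exact mul_le_mul (ih l) (h l j) (abs_nonneg _) ((abs_nonneg _).trans (ih l))

section LinftyOpNorm

attribute [local instance] Matrix.linftyOpSeminormedAddCommGroup Matrix.linftyOpNormedRing
  Matrix.linftyOpNormedAlgebra

theorem linfty_opNNNorm_le_of_nnnorm_le {m n α β : Type*} [Fintype m] [Fintype n]
    [SeminormedAddCommGroup α] [SeminormedAddCommGroup β] {A : Matrix m n α} {B : Matrix m n β}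
    (h : ∀ i j, ‖A i j‖₊ ≤ ‖B i j‖₊) : ‖A‖₊ ≤ ‖B‖₊ := by
  rw [linfty_opNNNorm_def, linfty_opNNNorm_def]
  exact Finset.sup_mono_fun fun i _ => Finset.sum_le_sum fun j _ => h i j

theorem spectralRadius_le_spectralRadius_map_ofReal_of_abs_le [Nonempty ι] {D R : Matrix ι ι ℝ}
    (h : ∀ i j, |D i j| ≤ R i j) :
    spectralRadius ℝ D ≤ spectralRadius ℂ (R.map Complex.ofReal) := by
  have hGelfand := (Filter.tendsto_add_atTop_iff_nat 1).2
    (spectrum.pow_nnnorm_pow_one_div_tendsto_nhds_spectralRadius (R.map Complex.ofReal))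
  refine ge_of_tendsto hGelfand (Filter.Eventually.of_forall fun k => ?_)
  have hnorm : ‖D ^ (k + 1)‖₊ ≤ ‖(R.map Complex.ofReal) ^ (k + 1)‖₊ := by
    rw [show R.map Complex.ofReal ^ (k + 1) = (R ^ (k + 1)).map Complex.ofReal from
      (map_pow Complex.ofRealHom.mapMatrix R (k + 1)).symm]
    refine linfty_opNNNorm_le_of_nnnorm_le fun i j => ?_
    rw [← NNReal.coe_le_coe, coe_nnnorm, coe_nnnorm]
    simpa using (abs_pow_apply_le_pow_apply h (k + 1) i j).trans (le_abs_self _)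
  -- over `ℝ` only the upper half of Gelfand's formula is available
  calc spectralRadius ℝ D ≤ (‖D ^ (k + 1)‖₊ : ℝ≥0∞) ^ (1 / (k + 1) : ℝ) := by
        simpa using spectrum.spectralRadius_le_pow_nnnorm_pow_one_div ℝ D k
    _ ≤ _ := by
        push_cast
        exact ENNReal.rpow_le_rpow (ENNReal.coe_le_coe.2 hnorm) (by positivity)

theorem IsHermitian.neg_le_eigenvalues_of_abs_le [Nonempty ι] {D R : Matrix ι ι ℝ}
    (hD : D.IsHermitian) (h : ∀ i j, |D i j| ≤ R i j) (i : ι) :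
    -(spectralRadius ℂ (R.map Complex.ofReal)).toReal ≤ hD.eigenvalues i := by
  have hfinite : spectralRadius ℂ (R.map Complex.ofReal) ≠ ⊤ :=
    ne_top_of_le_ne_top ENNReal.coe_ne_top (spectrum.spectralRadius_le_nnnorm _)
  have hle : (‖hD.eigenvalues i‖₊ : ℝ≥0∞) ≤ spectralRadius ℂ (R.map Complex.ofReal) :=
    (le_iSup₂ (f := fun (x : ℝ) _ => (‖x‖₊ : ℝ≥0∞)) _ (hD.eigenvalues_mem_spectrum_real i)).trans
      (spectralRadius_le_spectralRadius_map_ofReal_of_abs_le h)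
  have habs := ENNReal.toReal_mono hfinite hle
  rw [ENNReal.coe_toReal, coe_nnnorm, Real.norm_eq_abs] at habs
  exact neg_le_of_abs_le habs

end LinftyOpNorm

theorem IsHermitian.algebraMap_le_iff_le_eigenvalues {𝕜 : Type*} [RCLike 𝕜] {A : Matrix ι ι 𝕜}
    (hA : A.IsHermitian) {c : ℝ} :
    algebraMap ℝ (Matrix ι ι 𝕜) c ≤ A ↔ ∀ i, c ≤ hA.eigenvalues i := by
  rw [algebraMap_le_iff_le_spectrum hA.isSelfAdjoint, hA.spectrum_real_eq_range_eigenvalues]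
  simp

end Matrix

theorem eigenvalue_lower_bound_interval_matrix_general {n : ℕ}
    (H M R : Matrix (Fin n) (Fin n) ℝ)
    (hH : H.IsHermitian) (hM : M.IsHermitian)
    (hlo : ∀ i j, M i j - R i j ≤ H i j)
    (hhi : ∀ i j, H i j ≤ M i j + R i j) :
    (⨅ i, hM.eigenvalues i) - (spectralRadius ℂ (R.map Complex.ofReal)).toReal
      ≤ ⨅ i, hH.eigenvalues i := by
  rcases isEmpty_or_nonempty (Fin n) with _ | _
  · simp [Real.iInf_of_isEmpty]
  have hdist : ∀ i j, |(H - M) i j| ≤ R i j := fun i j =>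
    abs_sub_le_iff.2 ⟨by linarith [hhi i j], by linarith [hlo i j]⟩
  have hMmin : algebraMap ℝ _ (⨅ i, hM.eigenvalues i) ≤ M :=
    hM.algebraMap_le_iff_le_eigenvalues.2 fun i => ciInf_le (Finite.bddBelow_range _) i
  have hDmin : algebraMap ℝ _ (-(spectralRadius ℂ (R.map Complex.ofReal)).toReal) ≤ H - M :=
    (hH.sub hM).algebraMap_le_iff_le_eigenvalues.2 ((hH.sub hM).neg_le_eigenvalues_of_abs_le hdist)
  have hHmin := add_le_add hMmin hDmin
  rw [← map_add, add_sub_cancel, ← sub_eq_add_neg] at hHmin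
  exact le_ciInf (hH.algebraMap_le_iff_le_eigenvalues.1 hHmin)

/-- Rohn's eigenvalue bound: if H lies in the interval matrix with midpoint M
(symmetric) and entrywise-nonnegative radius R, then the smallest eigenvalue of H
is at least the smallest eigenvalue of M minus the spectral radius of R. -/
theorem eigenvalue_lower_bound_interval_matrix {n : ℕ} (hn : 0 < n)
    (H M R : Matrix (Fin n) (Fin n) ℝ)
    (hH : H.IsHermitian) (hM : M.IsHermitian)
    (hR : ∀ i j, 0 ≤ R i j)
    (hlo : ∀ i j, M i j - R i j ≤ H i j)
    (hhi : ∀ i j, H i j ≤ M i j + R i j) :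
    (⨅ i, hM.eigenvalues i) - (spectralRadius ℂ (R.map Complex.ofReal)).toReal
      ≤ ⨅ i, hH.eigenvalues i :=
  eigenvalue_lower_bound_interval_matrix_general H M R hH hM hlo hhi
end

section
/- Let ϱ : ℝⁿ → ℝ be differentiable at z̄ and write ϱ = ϱᵃ − ϱᵇ with ϱᵃ, ϱᵇ convex on a compact polytope P = convexHull(vert(P)) ⊆ ℝⁿ containing z̄, both differentiable at z̄. Define the linearization ϱ̄(z) = ϱ(z̄) + ∇ϱ(z̄)ᵀ(z−z̄), the error e(z) = ϱ(z) − ϱ̄(z), and e⁻ = min_{z ∈ vert(P)} (ϱ̄ᵃ(z) − ϱᵇ(z) − ϱ̄(z)), e⁺ = max_{z ∈ vert(P)} (ϱᵃ(z) − ϱ̄ᵇ(z) − ϱ̄(z)), where ϱ̄ˢ(z) = ϱˢ(z̄) + ∇ϱˢ(z̄)ᵀ(z−z̄) for s ∈ {a,b}. Then e(z) ∈ [e⁻, e⁺] for all z ∈ P. -/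
/-!
For convex `f` differentiable at `zbar`, the first-order remainder `R f = f - f̄` is convex (it
differs from `f` by an affine function) and nonnegative on the hull (gradient inequality). The
linearization error of `fa - fb` is `R fa - R fb`, hence lies between the concave function
`-R fb` and the convex function `R fa`; by the maximum principle these are bounded on the hull by
their extreme values at the vertices, which are exactly the terms of `e⁻` and `e⁺`.
-/

open AffineMap

section FirstOrder

variable {E : Type*} [NormedAddCommGroup E] [NormedSpace ℝ E]
  {s : Set E} {f : E → ℝ} {F : E →L[ℝ] ℝ} {x y : E}

theorem ConvexOn.map_sub_le_sub_of_hasFDerivAt (hf : ConvexOn ℝ s f) (hx : x ∈ s) (hy : y ∈ s)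
    (hF : HasFDerivAt f F x) : F (y - x) ≤ f y - f x := by
  have hline : ConvexOn ℝ (lineMap (k := ℝ) x y ⁻¹' s) (f ∘ lineMap x y) :=
    hf.comp_affineMap _
  have hderiv : HasDerivAt (f ∘ lineMap (k := ℝ) x y) (F (y - x)) 0 :=
    HasFDerivAt.comp_hasDerivAt (0 : ℝ) (by simpa using hF) hasDerivAt_lineMap
  have := hline.le_slope_of_hasDerivAt (by simpa using hx) (by simpa using hy) zero_lt_one hderiv
  simpa [slope_def_field] using this

/-- `ϱ - ϱ̄` in the paper's notation, when `F = ϱ'(x)`. -/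
def firstOrderRemainder (f : E → ℝ) (F : E →L[ℝ] ℝ) (x z : E) : ℝ :=
  f z - (f x + F (z - x))

theorem convexOn_firstOrderRemainder (hf : ConvexOn ℝ s f) (F : E →L[ℝ] ℝ) (x : E) :
    ConvexOn ℝ s (firstOrderRemainder f F x) := by
  have h := (hf.add ((-F : E →L[ℝ] ℝ).toLinearMap.convexOn hf.1)).add_const (F x - f x)
  have heq : firstOrderRemainder f F x =
      f + ⇑(-F : E →L[ℝ] ℝ).toLinearMap + fun _ => F x - f x := by
    ext z
    simp only [firstOrderRemainder, Pi.add_apply, ContinuousLinearMap.coe_coe,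
      neg_apply, map_sub]
    ring
  rwa [heq]

theorem ConvexOn.firstOrderRemainder_nonneg (hf : ConvexOn ℝ s f) (hx : x ∈ s) (hy : y ∈ s)
    (hF : HasFDerivAt f F x) : 0 ≤ firstOrderRemainder f F x y := by
  have := hf.map_sub_le_sub_of_hasFDerivAt hx hy hF
  unfold firstOrderRemainder
  linarith

end FirstOrder

section MaximumPrinciple

variable {E : Type*} [AddCommGroup E] [Module ℝ E] {V : Finset E} {g : E → ℝ} {z : E}

theorem ConvexOn.le_sup'_of_mem_convexHull (hg : ConvexOn ℝ (convexHull ℝ (V : Set E)) g)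
    (hV : V.Nonempty) (hz : z ∈ convexHull ℝ (V : Set E)) : g z ≤ V.sup' hV g := by
  obtain ⟨v, hv, hle⟩ := hg.exists_ge_of_mem_convexHull (subset_convexHull ℝ _) hz
  exact hle.trans (V.le_sup' g hv)

theorem ConcaveOn.inf'_le_of_mem_convexHull (hg : ConcaveOn ℝ (convexHull ℝ (V : Set E)) g)
    (hV : V.Nonempty) (hz : z ∈ convexHull ℝ (V : Set E)) : V.inf' hV g ≤ g z := by
  obtain ⟨v, hv, hle⟩ := hg.exists_le_of_mem_convexHull (subset_convexHull ℝ _) hz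
  exact (V.inf'_le g hv).trans hle

end MaximumPrinciple

/-- Linearization-error enclosure via DC programming: on a polytope P = conv(V),
the error e(z) = f(z) − f̄(z) of the first-order expansion of the DC function
f = fa − fb at zbar lies in [e⁻, e⁺], where e⁻ and e⁺ are obtained by evaluating
the concave minorant and convex majorant of e at the vertices. -/
theorem linearization_error_enclosure {n : ℕ}
    (V : Finset (Fin n → ℝ)) (hV : V.Nonempty)
    (fa fb : (Fin n → ℝ) → ℝ)
    (hfa : ConvexOn ℝ (convexHull ℝ (V : Set (Fin n → ℝ))) fa)
    (hfb : ConvexOn ℝ (convexHull ℝ (V : Set (Fin n → ℝ))) fb)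
    (zbar : Fin n → ℝ) (hzbar : zbar ∈ convexHull ℝ (V : Set (Fin n → ℝ)))
    (Fa Fb : (Fin n → ℝ) →L[ℝ] ℝ)
    (hFa : HasFDerivAt fa Fa zbar) (hFb : HasFDerivAt fb Fb zbar) :
    ∀ z ∈ convexHull ℝ (V : Set (Fin n → ℝ)),
      -- e(z) = f(z) − f̄(z) with f = fa − fb and f̄(z) = f(zbar) + ∇f(zbar)ᵀ(z−zbar)
      (fa z - fb z) - ((fa zbar - fb zbar) + (Fa (z - zbar) - Fb (z - zbar)))
        ∈ Set.Icc
          (V.inf' hV (fun v =>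
            ((fa zbar + Fa (v - zbar)) - fb v)
              - ((fa zbar - fb zbar) + (Fa (v - zbar) - Fb (v - zbar)))))
          (V.sup' hV (fun v =>
            (fa v - (fb zbar + Fb (v - zbar)))
              - ((fa zbar - fb zbar) + (Fa (v - zbar) - Fb (v - zbar))))) := by
  intro z hz
  have herror : (fa z - fb z) - ((fa zbar - fb zbar) + (Fa (z - zbar) - Fb (z - zbar)))
      = firstOrderRemainder fa Fa zbar z - firstOrderRemainder fb Fb zbar z := by
    simp only [firstOrderRemainder]; ring
  have hlower : (fun v => ((fa zbar + Fa (v - zbar)) - fb v)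
      - ((fa zbar - fb zbar) + (Fa (v - zbar) - Fb (v - zbar))))
      = -firstOrderRemainder fb Fb zbar := by
    ext v; simp only [firstOrderRemainder, Pi.neg_apply]; ring
  have hupper : (fun v => (fa v - (fb zbar + Fb (v - zbar)))
      - ((fa zbar - fb zbar) + (Fa (v - zbar) - Fb (v - zbar))))
      = firstOrderRemainder fa Fa zbar := by
    ext v; simp only [firstOrderRemainder]; ring
  have hRa := hfa.firstOrderRemainder_nonneg hzbar hz hFa
  have hRb := hfb.firstOrderRemainder_nonneg hzbar hz hFb
  have hmin := (convexOn_firstOrderRemainder hfb Fb zbar).neg.inf'_le_of_mem_convexHull hV hz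
  have hmax := (convexOn_firstOrderRemainder hfa Fa zbar).le_sup'_of_mem_convexHull hV hz
  rw [herror, hlower, hupper, Set.mem_Icc]
  rw [Pi.neg_apply] at hmin
  constructor <;> linarith
end

section
/- Let X = CZ(G_x, c_x, A_x, b_x) and W = CZ(G_w, c_w, A_w, b_w) be constrained zonotopes in ℝⁿ and ℝ^p respectively, and M ∈ ℝ^{p×n}. If W is a zonotope (no constraints), M = I with p = n, then X ∩_I W as computed by the constrained-zonotope intersection formula is exactly X ∩ W; in particular, unlike for plain zonotopes, no outer approximation is introduced by intersection of constrained zonotopes. -/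
/-- A zonotope: a constrained zonotope without constraints. -/
def Zon {n g : Type*} [Fintype g] (G : Matrix n g ℝ) (c : n → ℝ) : Set (n → ℝ) :=
  {x | ∃ ξ : g → ℝ, (∀ i, |ξ i| ≤ 1) ∧ x = G.mulVec ξ + c}

/-!
Write a generator vector of the formula as `Sum.elim ξ ζ`. The first block of constraint rows
says that `ξ` is an admissible parameter of `CZ G c A b`, with `x = G ξ + c`; the second
block, `M G ξ - G' ζ = c' - M c`, is `M x = G' ζ + c'` rearranged, i.e. `ζ` witnesses
`M x ∈ Zon G' c'`.
-/

open Matrix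

lemma Sum.exists_elim {α β γ : Type*} {p : (α ⊕ β → γ) → Prop} :
    (∃ f, p f) ↔ ∃ f g, p (Sum.elim f g) :=
  ⟨fun ⟨f, hf⟩ => ⟨f ∘ Sum.inl, f ∘ Sum.inr, by rwa [Sum.elim_comp_inl_inr]⟩,
    fun ⟨_, _, h⟩ => ⟨_, h⟩⟩

lemma mulVec_affine_eq_iff {m n g g' : Type*} [Fintype n] [Fintype g] [Fintype g']
    (M : Matrix m n ℝ) (G : Matrix n g ℝ) (c : n → ℝ) (G' : Matrix m g' ℝ) (c' : m → ℝ)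
    (ξ : g → ℝ) (ζ : g' → ℝ) :
    M *ᵥ (G *ᵥ ξ + c) = G' *ᵥ ζ + c' ↔ (M * G) *ᵥ ξ + (-G') *ᵥ ζ = c' - M *ᵥ c := by
  rw [mulVec_add, mulVec_mulVec, neg_mulVec, ← sub_eq_add_neg, sub_eq_sub_iff_add_eq_add,
    add_comm c']

theorem CZ_intersection_eq_inter_preimage {m n g g' h : Type*} [Fintype m] [Fintype n]
    [Fintype g] [Fintype g'] [Fintype h]
    (G : Matrix n g ℝ) (c : n → ℝ) (A : Matrix h g ℝ) (b : h → ℝ)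
    (G' : Matrix m g' ℝ) (c' : m → ℝ) (M : Matrix m n ℝ) :
    CZ (fromCols G (0 : Matrix n g' ℝ)) c
        (fromRows (fromCols A (0 : Matrix h g' ℝ)) (fromCols (M * G) (-G')))
        (Sum.elim b (c' - M *ᵥ c))
      = CZ G c A b ∩ (M *ᵥ ·) ⁻¹' Zon G' c' := by
  ext x
  simp only [CZ, Zon, Set.mem_inter_iff, Set.mem_preimage, Set.mem_ofPred_eq, Sum.exists_elim,
    Sum.forall, Sum.elim_inl, Sum.elim_inr, fromRows_mulVec, fromCols_mulVec_sumElim,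
    zero_mulVec, add_zero, Sum.elim_eq_iff]
  constructor
  · rintro ⟨ξ, ζ, ⟨hξ, hζ⟩, ⟨hA, hW⟩, rfl⟩
    exact ⟨⟨ξ, hξ, hA, rfl⟩, ζ, hζ, (mulVec_affine_eq_iff ..).2 hW⟩
  · rintro ⟨⟨ξ, hξ, hA, rfl⟩, ζ, hζ, hW⟩
    exact ⟨ξ, ζ, ⟨hξ, hζ⟩, ⟨hA, (mulVec_affine_eq_iff ..).1 hW⟩, rfl⟩

/-- The constrained-zonotope intersection formula with M = I and W a zonotope is
exactly the ordinary intersection X ∩ W — no outer approximation is introduced. -/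
theorem cz_intersection_exact {n ngx ngw nhx : ℕ}
    (Gx : Matrix (Fin n) (Fin ngx) ℝ) (cx : Fin n → ℝ)
    (Ax : Matrix (Fin nhx) (Fin ngx) ℝ) (bx : Fin nhx → ℝ)
    (Gw : Matrix (Fin n) (Fin ngw) ℝ) (cw : Fin n → ℝ) :
    CZ (Matrix.fromCols Gx (0 : Matrix (Fin n) (Fin ngw) ℝ)) cx
        (Matrix.fromRows (Matrix.fromCols Ax (0 : Matrix (Fin nhx) (Fin ngw) ℝ))
          (Matrix.fromCols ((1 : Matrix (Fin n) (Fin n) ℝ) * Gx) (-Gw)))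
        (Sum.elim bx (cw - (1 : Matrix (Fin n) (Fin n) ℝ).mulVec cx))
      = CZ Gx cx Ax bx ∩ Zon Gw cw := by
  rw [CZ_intersection_eq_inter_preimage]
  simp only [one_mulVec, Set.preimage_id']
end
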